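/- Let n ≥ 2 and let t_1, …, t_n be lattice terms over a variable type β. Then t_1, …, t_n are DLat-dependent if and only if there exists a nonempty proper subset I of Fin n such that ⊨_DLat ⊓_{i ∈ I} t_i ≤ ⊔_{j ∈ Fin n \ I} t_j, where ⊓ and ⊔ denote the meet, respectively join, with some fixed bracketing, of the indicated terms. -/

import Mathlib

/-- Lattice terms over variable type `α`: first-order terms in the language with exactly
two binary function symbols (meet and join). -/
inductive LatTerm (α : Type) : Type
  | var : α → LatTerm α
  | meet : LatTerm α → LatTerm α → LatTerm α
  | join : LatTerm α → LatTerm α → LatTerm α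

namespace LatTerm

/-- Realization of a lattice term in a lattice `M` under a valuation `v`. -/
def realize {α M : Type} [Lattice M] (v : α → M) : LatTerm α → M
  | var a => v a
  | meet s t => realize v s ⊓ realize v t
  | join s t => realize v s ⊔ realize v t

/-- Simultaneous substitution of lattice terms for variables. -/
def subst {α β : Type} (σ : α → LatTerm β) : LatTerm α → LatTerm β
  | var a => σ a
  | meet s t => meet (subst σ s) (subst σ t)
  | join s t => join (subst σ s) (subst σ t)

end LatTerm

/-- A lattice equation: a pair of lattice terms. -/
abbrev LatEq (α : Type) : Type := LatTerm α × LatTerm α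

/-- The inequation `s ≤ t`, as the equation `s ⊓ t ≈ s`. -/
def leEq {α : Type} (s t : LatTerm α) : LatEq α := (s.meet t, s)

/-- Lat-validity: the two terms have equal realizations in every lattice under
every valuation. -/
def LatValid {α : Type} (e : LatEq α) : Prop :=
  ∀ (M : Type) [Lattice M] (v : α → M), e.1.realize v = e.2.realize v

/-- The join, with a fixed bracketing, of `f 0, …, f m`. -/
def finJoin {α : Type} : {m : ℕ} → (Fin (m + 1) → LatTerm α) → LatTerm α
  | 0, f => f 0
  | _ + 1, f => LatTerm.join (finJoin fun k => f k.castSucc) (f (Fin.last _))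

/-- The meet, with a fixed bracketing, of `f 0, …, f m`. -/
def finMeet {α : Type} : {m : ℕ} → (Fin (m + 1) → LatTerm α) → LatTerm α
  | 0, f => f 0
  | _ + 1, f => LatTerm.meet (finMeet fun k => f k.castSucc) (f (Fin.last _))

/-- DLat-validity: equal realizations in every distributive lattice under every valuation. -/
def DLatValid {α : Type} (e : LatEq α) : Prop :=
  ∀ (M : Type) [DistribLattice M] (v : α → M), e.1.realize v = e.2.realize v

/-- `Γ ⊢~_DLat Δ`. -/
def DLatAdm {n : ℕ} (Γ Δ : Set (LatEq (Fin n))) : Prop :=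
  ∀ σ : Fin n → LatTerm ℕ,
    (∀ e ∈ Γ, DLatValid (e.1.subst σ, e.2.subst σ)) →
      ∃ d ∈ Δ, DLatValid (d.1.subst σ, d.2.subst σ)

/-- `Δ` is DLat-refuting for the variables of `Fin n`. -/
def DLatRefuting {n : ℕ} (Δ : Set (LatEq (Fin n))) : Prop :=
  ∀ e : LatEq (Fin n), ¬ DLatValid e ↔ DLatAdm {e} Δ

/-- The join, with a fixed bracketing, of a nonempty list of lattice terms. -/
def joinListNE {α : Type} : (l : List (LatTerm α)) → l ≠ [] → LatTerm α
  | [], h => absurd rfl h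
  | a :: l, _ => l.foldl LatTerm.join a

/-- The meet, with a fixed bracketing, of a nonempty list of lattice terms. -/
def meetListNE {α : Type} : (l : List (LatTerm α)) → l ≠ [] → LatTerm α
  | [], h => absurd rfl h
  | a :: l, _ => l.foldl LatTerm.meet a

/-- The join, with a fixed bracketing and order, of `f i` for `i` in a nonempty finset `s`. -/
noncomputable def finsetJoin {γ α : Type} (s : Finset γ) (hs : s.Nonempty)
    (f : γ → LatTerm α) : LatTerm α :=
  joinListNE (s.toList.map f)
    (by simp only [ne_eq, List.map_eq_nil_iff, Finset.toList_eq_nil]; exact hs.ne_empty)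

/-- The meet, with a fixed bracketing and order, of `f i` for `i` in a nonempty finset `s`. -/
noncomputable def finsetMeet {γ α : Type} (s : Finset γ) (hs : s.Nonempty)
    (f : γ → LatTerm α) : LatTerm α :=
  meetListNE (s.toList.map f)
    (by simp only [ne_eq, List.map_eq_nil_iff, Finset.toList_eq_nil]; exact hs.ne_empty)

/-- The set `Δ_n^{DL}` (for `n = m + 2`) of equations
`⊓_{i ∈ I} y_i ≤ ⊔_{j ∈ Fin n \ I} y_j` for `I` a nonempty proper subset of `Fin n`
(properness being recorded by the nonemptiness of the complement of `I`). -/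
def DeltaDL (m : ℕ) : Set (LatEq (Fin (m + 2))) :=
  { e | ∃ (I : Finset (Fin (m + 2))) (hI : I.Nonempty) (_ : I ≠ Finset.univ)
          (hc : Iᶜ.Nonempty),
      e = leEq (finsetMeet I hI LatTerm.var) (finsetJoin Iᶜ hc LatTerm.var) }

/-- `t 0, …, t (n-1)` are DLat-dependent: some equation `e` over `Fin n` satisfies
`⊨_DLat e(t 0, …, t (n-1))` but not `⊨_DLat e`. -/
def DLatDependent {β : Type} {n : ℕ} (t : Fin n → LatTerm β) : Prop :=
  ∃ e : LatEq (Fin n), DLatValid (e.1.subst t, e.2.subst t) ∧ ¬ DLatValid e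

/-!
Distributive lattices are separated by homomorphisms to `Bool` (prime ideal theorem), so
DLat-validity is validity in `Bool`. There the terms `tᵢ` define a map
`T : (β → Bool) → (Fin n → Bool)`, `ω ↦ (tᵢ(ω))ᵢ`, and `ε(t)` is valid iff `ε` holds on the
range of `T`. The equation `⊓_I yᵢ ≤ ⊔_{Iᶜ} yⱼ` fails exactly at the indicator of `I`, and `T`
hits the two constant points. So `t` is dependent iff `T` misses some point, necessarily the
indicator of a nonempty proper `I`, iff `⊓_I tᵢ ≤ ⊔_{Iᶜ} tⱼ` is valid.
-/

namespace LatTerm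

variable {α β M N : Type}

theorem realize_map [Lattice M] [Lattice N] {F : Type} [FunLike F M N] [LatticeHomClass F M N]
    (f : F) (v : α → M) : ∀ s : LatTerm α, f (s.realize v) = s.realize (f ∘ v)
  | var _ => rfl
  | meet s t => by simp only [realize, map_inf, realize_map f v s, realize_map f v t]
  | join s t => by simp only [realize, map_sup, realize_map f v s, realize_map f v t]

theorem realize_subst [Lattice M] (σ : α → LatTerm β) (v : β → M) :
    ∀ s : LatTerm α, (s.subst σ).realize v = s.realize fun a => (σ a).realize v
  | var _ => rfl
  | meet s t => by simp only [subst, realize, realize_subst σ v s, realize_subst σ v t]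
  | join s t => by simp only [subst, realize, realize_subst σ v s, realize_subst σ v t]

theorem realize_const [Lattice M] (c : M) : ∀ s : LatTerm α, s.realize (fun _ => c) = c
  | var _ => rfl
  | meet s t => by simp only [realize, realize_const c s, realize_const c t, inf_idem]
  | join s t => by simp only [realize, realize_const c s, realize_const c t, sup_idem]

theorem le_realize_foldl_meet_iff [Lattice M] (v : α → M) (c : M) :
    ∀ (l : List (LatTerm α)) (a : LatTerm α),
      c ≤ (l.foldl meet a).realize v ↔ ∀ x ∈ a :: l, c ≤ x.realize v
  | [], a => by simp
  | b :: l, a => by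
    simp [le_realize_foldl_meet_iff v c l (a.meet b), realize, and_assoc]

theorem realize_foldl_join_le_iff [Lattice M] (v : α → M) (c : M) :
    ∀ (l : List (LatTerm α)) (a : LatTerm α),
      (l.foldl join a).realize v ≤ c ↔ ∀ x ∈ a :: l, x.realize v ≤ c
  | [], a => by simp
  | b :: l, a => by
    simp [realize_foldl_join_le_iff v c l (a.join b), realize, and_assoc]

theorem le_realize_meetListNE_iff [Lattice M] (v : α → M) (c : M) :
    ∀ (l : List (LatTerm α)) (hl : l ≠ []),
      c ≤ (meetListNE l hl).realize v ↔ ∀ x ∈ l, c ≤ x.realize v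
  | [], hl => absurd rfl hl
  | a :: l, _ => le_realize_foldl_meet_iff v c l a

theorem realize_joinListNE_le_iff [Lattice M] (v : α → M) (c : M) :
    ∀ (l : List (LatTerm α)) (hl : l ≠ []),
      (joinListNE l hl).realize v ≤ c ↔ ∀ x ∈ l, x.realize v ≤ c
  | [], hl => absurd rfl hl
  | a :: l, _ => realize_foldl_join_le_iff v c l a

theorem realize_finsetMeet [Lattice M] {γ : Type} (I : Finset γ) (hI : I.Nonempty)
    (f : γ → LatTerm α) (v : α → M) :
    (finsetMeet I hI f).realize v = I.inf' hI fun i => (f i).realize v :=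
  eq_of_forall_le_iff fun c => by
    simp [finsetMeet, le_realize_meetListNE_iff, Finset.le_inf'_iff]

theorem realize_finsetJoin [Lattice M] {γ : Type} (I : Finset γ) (hI : I.Nonempty)
    (f : γ → LatTerm α) (v : α → M) :
    (finsetJoin I hI f).realize v = I.sup' hI fun i => (f i).realize v :=
  eq_of_forall_ge_iff fun c => by
    simp [finsetJoin, realize_joinListNE_le_iff, Finset.sup'_le_iff]

end LatTerm

namespace Order.Ideal.IsPrime

variable {M : Type} [DistribLattice M] {J : Ideal M}

open Classical in
noncomputable def toLatticeHomBool (hJ : J.IsPrime) : LatticeHom M Bool where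
  toFun x := decide (x ∉ J)
  map_sup' x y := by simp
  map_inf' x y := by
    have : x ⊓ y ∈ J ↔ x ∈ J ∨ y ∈ J :=
      ⟨hJ.mem_or_mem, fun h => h.elim (J.lower inf_le_left) (J.lower inf_le_right)⟩
    simp [this, not_or]

theorem toLatticeHomBool_apply (hJ : J.IsPrime) (x : M) :
    hJ.toLatticeHomBool x = true ↔ x ∉ J := by
  simp [toLatticeHomBool]

end Order.Ideal.IsPrime

namespace DistribLattice

variable {M : Type} [DistribLattice M]

theorem exists_latticeHom_bool_of_not_le {a b : M} (h : ¬ a ≤ b) :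
    ∃ f : LatticeHom M Bool, f a = true ∧ f b = false := by
  have hdisj : Disjoint (Order.PFilter.principal a : Set M) (Order.Ideal.principal b) :=
    Set.disjoint_left.2 fun x hax hxb => h (le_trans hax hxb)
  obtain ⟨J, hJ, hbJ, haJ⟩ := prime_ideal_of_disjoint_filter_ideal hdisj
  refine ⟨hJ.toLatticeHomBool, (hJ.toLatticeHomBool_apply a).2 ?_, ?_⟩
  · exact Set.disjoint_left.1 haJ (Order.PFilter.mem_principal.2 le_rfl)
  · exact Bool.eq_false_iff.2 fun hb =>
      (hJ.toLatticeHomBool_apply b).1 hb (hbJ Order.Ideal.mem_principal_self)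

theorem exists_latticeHom_bool_ne {a b : M} (h : a ≠ b) :
    ∃ f : LatticeHom M Bool, f a ≠ f b := by
  by_cases hab : a ≤ b
  · obtain ⟨f, hb, ha⟩ := exists_latticeHom_bool_of_not_le fun hba => h (le_antisymm hab hba)
    exact ⟨f, by simp [ha, hb]⟩
  · obtain ⟨f, ha, hb⟩ := exists_latticeHom_bool_of_not_le hab
    exact ⟨f, by simp [ha, hb]⟩

end DistribLattice

namespace Finset

variable {γ : Type}

theorem bool_inf'_eq_true_iff (I : Finset γ) (hI : I.Nonempty) (g : γ → Bool) :
    I.inf' hI g = true ↔ ∀ i ∈ I, g i = true := by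
  have := le_inf'_iff (a := true) hI g
  simp only [Bool.le_iff_imp, forall_const] at this
  exact this

theorem bool_sup'_eq_false_iff (I : Finset γ) (hI : I.Nonempty) (g : γ → Bool) :
    I.sup' hI g = false ↔ ∀ i ∈ I, g i = false := by
  have := sup'_le_iff (a := false) hI g
  simp only [Bool.le_iff_imp, Bool.false_eq_true, imp_false, Bool.not_eq_true] at this
  exact this

theorem bool_inf'_le_sup'_compl_iff [Fintype γ] [DecidableEq γ] (I : Finset γ) (hI : I.Nonempty)
    (hc : Iᶜ.Nonempty) (g : γ → Bool) :
    I.inf' hI g ≤ Iᶜ.sup' hc g ↔ g ≠ fun i => decide (i ∈ I) := by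
  rw [Ne, funext_iff, ← not_lt, not_iff_not, Bool.lt_iff, bool_inf'_eq_true_iff,
    bool_sup'_eq_false_iff]
  constructor
  · rintro ⟨hIc, hI⟩ i
    by_cases hi : i ∈ I
    · simp [hi, hI i hi]
    · simp [hi, hIc i (mem_compl.2 hi)]
  · intro h
    exact ⟨fun i hi => by simpa [h i] using mem_compl.1 hi, fun i hi => by simp [h i, hi]⟩

end Finset

theorem dlatValid_iff_forall_bool {α : Type} (e : LatEq α) :
    DLatValid e ↔ ∀ w : α → Bool, e.1.realize w = e.2.realize w := by
  refine ⟨fun h w => h Bool w, fun h M _ v => ?_⟩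
  by_contra hne
  obtain ⟨f, hf⟩ := DistribLattice.exists_latticeHom_bool_ne hne
  exact hf (by rw [LatTerm.realize_map, LatTerm.realize_map]; exact h _)

theorem dlatValid_subst_iff_forall_bool {α β : Type} (σ : α → LatTerm β) (e : LatEq α) :
    DLatValid (e.1.subst σ, e.2.subst σ) ↔
      ∀ ω : β → Bool, e.1.realize (fun a => (σ a).realize ω)
        = e.2.realize (fun a => (σ a).realize ω) := by
  simp only [dlatValid_iff_forall_bool, LatTerm.realize_subst]

theorem realize_leEq_finsetMeet_finsetJoin_compl_iff {γ α : Type} [Fintype γ] [DecidableEq γ]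
    (I : Finset γ) (hI : I.Nonempty) (hc : Iᶜ.Nonempty) (f : γ → LatTerm α) (w : α → Bool) :
    let e := leEq (finsetMeet I hI f) (finsetJoin Iᶜ hc f)
    e.1.realize w = e.2.realize w ↔ (fun i => (f i).realize w) ≠ fun i => decide (i ∈ I) := by
  simp only [leEq, LatTerm.realize, inf_eq_left, LatTerm.realize_finsetMeet,
    LatTerm.realize_finsetJoin, Finset.bool_inf'_le_sup'_compl_iff]

theorem stmt12 (m : ℕ) {β : Type} (t : Fin (m + 2) → LatTerm β) :
    DLatDependent t ↔
      ∃ (I : Finset (Fin (m + 2))) (hI : I.Nonempty) (_ : I ≠ Finset.univ)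
        (hc : Iᶜ.Nonempty),
        DLatValid (leEq (finsetMeet I hI t) (finsetJoin Iᶜ hc t)) := by
  classical
  set T : (β → Bool) → Fin (m + 2) → Bool := fun ω i => (t i).realize ω
  have hvalid_iff : ∀ I hI hc, DLatValid (leEq (finsetMeet I hI t) (finsetJoin Iᶜ hc t)) ↔
      ∀ ω, T ω ≠ fun i => decide (i ∈ I) := fun I hI hc => by
    simp only [dlatValid_iff_forall_bool, realize_leEq_finsetMeet_finsetJoin_compl_iff, T]
  constructor
  · rintro ⟨e, het, he⟩
    obtain ⟨w, hw⟩ := not_forall.1 ((dlatValid_iff_forall_bool e).not.1 he)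
    have hw_range : ∀ ω, T ω ≠ w := fun ω h =>
      hw (h ▸ (dlatValid_subst_iff_forall_bool t e).1 het ω)
    have hw_nonconst : ∀ c, w ≠ fun _ => c := fun c h =>
      hw_range (fun _ => c) (by funext i; simp [T, LatTerm.realize_const, h])
    set I := Finset.univ.filter fun i => w i = true
    have hwI : (fun i => decide (i ∈ I)) = w := by funext i; simp [I]
    have hI : I.Nonempty := by
      rw [Finset.nonempty_iff_ne_empty]
      exact fun h => hw_nonconst false (by rw [← hwI, h]; simp)
    have hne : I ≠ Finset.univ := fun h => hw_nonconst true (by rw [← hwI, h]; simp)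
    have hc : Iᶜ.Nonempty := Finset.nonempty_iff_ne_empty.2 (by simpa using hne)
    exact ⟨I, hI, hne, hc, (hvalid_iff I hI hc).2 (hwI ▸ hw_range)⟩
  · rintro ⟨I, hI, -, hc, hval⟩
    refine ⟨leEq (finsetMeet I hI LatTerm.var) (finsetJoin Iᶜ hc LatTerm.var), ?_, fun h => ?_⟩
    · exact (dlatValid_subst_iff_forall_bool t _).2 fun ω =>
        (realize_leEq_finsetMeet_finsetJoin_compl_iff I hI hc _ _).2 ((hvalid_iff I hI hc).1 hval ω)
    · exact (realize_leEq_finsetMeet_finsetJoin_compl_iff I hI hc _ _).1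
        (h Bool fun i => decide (i ∈ I)) rfl
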